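/- For every natural number n, the game {0 | n·↑ + *} is equal (as a game value) to (n+1)·↑. -/

import Mathlib

universe u

namespace SetTheory

/-- Pre-games, as formerly defined in Mathlib (`SetTheory.PGame`, removed from Mathlib since). -/
inductive PGame : Type (u + 1)
  | mk : ∀ α β : Type u, (α → PGame) → (β → PGame) → PGame

namespace PGame

/-- The pre-game with no options, as in former Mathlib. -/
instance : Zero PGame.{u} :=
  ⟨PGame.mk PEmpty PEmpty PEmpty.elim PEmpty.elim⟩

/-- Sum of pre-games, as in former Mathlib. -/
noncomputable def add (x : PGame.{u}) : PGame.{u} → PGame.{u} :=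
  PGame.rec (motive := fun _ => PGame.{u} → PGame.{u})
    (fun xl xr _ _ IHxl IHxr y =>
      PGame.rec (motive := fun _ => PGame.{u})
        (fun yl yr yL yR IHyl IHyr =>
          PGame.mk (xl ⊕ yl) (xr ⊕ yr)
            (Sum.rec (fun i => IHxl i (PGame.mk yl yr yL yR)) IHyl)
            (Sum.rec (fun i => IHxr i (PGame.mk yl yr yL yR)) IHyr)) y) x

noncomputable instance : Add PGame.{u} := ⟨add⟩

/-- Pair (x ≤ y, x ⧏ y), as in former Mathlib's `le_lf`. -/
noncomputable def leLF (x : PGame.{u}) : PGame.{u} → Prop × Prop :=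
  PGame.rec (motive := fun _ => PGame.{u} → Prop × Prop)
    (fun xl xr xL xR IHxl IHxr y =>
      PGame.rec (motive := fun _ => Prop × Prop)
        (fun yl yr yL yR IHyl IHyr =>
          ((∀ i, (IHxl i (PGame.mk yl yr yL yR)).2) ∧ ∀ j, (IHyr j).2,
            (∃ i, (IHyl i).1) ∨ ∃ j, (IHxr j (PGame.mk yl yr yL yR)).1)) y) x

noncomputable instance : LE PGame.{u} := ⟨fun x y => (leLF x y).1⟩

/-- Game equivalence `x ≈ y ↔ x ≤ y ∧ y ≤ x`, as in former Mathlib. -/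
instance : HasEquiv PGame.{u} := ⟨fun x y => x ≤ y ∧ y ≤ x⟩

/-- Pre-game from lists of options, as in former Mathlib. -/
def ofLists (L R : List PGame.{u}) : PGame.{u} :=
  PGame.mk (ULift (Fin L.length)) (ULift (Fin R.length)) (fun i => L[i.down.1]) fun j => R[j.down.1]

end PGame

end SetTheory

open SetTheory PGame

/-- star = {0|0} -/
noncomputable def star' : PGame := PGame.ofLists [0] [0]
/-- up = {0|*} -/
noncomputable def up' : PGame := PGame.ofLists [0] [star']
/-- down = {*|0} -/
noncomputable def down' : PGame := PGame.ofLists [star'] [0]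

/-- sum of n copies of up -/
noncomputable def nUp : ℕ → PGame
  | 0 => 0
  | n + 1 => nUp n + up'

/-- sum of n copies of down -/
noncomputable def nDown : ℕ → PGame
  | 0 => 0
  | n + 1 => nDown n + down'

/-- iterated up: up^[1] = ↑, up^[n] = {up^[n-1] | *} -/
noncomputable def upIter : ℕ → PGame
  | 0 => 0
  | 1 => up'
  | n + 2 => PGame.ofLists [upIter (n + 1)] [star']

/-- iterated down: down_[1] = ↓, down_[n] = {* | down_[n-1]} -/
noncomputable def downIter : ℕ → PGame
  | 0 => 0
  | 1 => down'
  | n + 2 => PGame.ofLists [star'] [downIter (n + 1)]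

/-!
Write `G n = {0 | n·↑ + *}` (`zeroNUpStar n`). The left options of `(n+1)·↑ = n·↑ + ↑`
are all equivalent to `n·↑` and its right options to `n·↑ + *`, so comparing options
shows `G n ≈ (n+1)·↑` as soon as `n·↑ ⧏ G n`. Moving `↑` to `*` gives `n·↑ ⧏ G n` from
`(n-1)·↑ + * ≤ G n`, and the latter follows from the equivalence at `n - 2` together with the
monotonicity of `G`; so all three facts go through by a joint induction on `n`.
-/

namespace SetTheory.PGame

def LeftMoves : PGame.{u} → Type u
  | mk l _ _ _ => l

def RightMoves : PGame.{u} → Type u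
  | mk _ r _ _ => r

def moveLeft : (x : PGame.{u}) → x.LeftMoves → PGame.{u}
  | mk _ _ L _ => L

def moveRight : (x : PGame.{u}) → x.RightMoves → PGame.{u}
  | mk _ _ _ R => R

def LF (x y : PGame.{u}) : Prop := (leLF x y).2

infix:50 " ⧏ " => LF

instance : IsEmpty (LeftMoves (0 : PGame.{u})) := inferInstanceAs (IsEmpty PEmpty)

instance : IsEmpty (RightMoves (0 : PGame.{u})) := inferInstanceAs (IsEmpty PEmpty)

theorem le_iff_forall_lf {x y : PGame.{u}} :
    x ≤ y ↔ (∀ i, x.moveLeft i ⧏ y) ∧ ∀ j, x ⧏ y.moveRight j := by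
  cases x; cases y; exact Iff.rfl

theorem lf_iff_exists_le {x y : PGame.{u}} :
    x ⧏ y ↔ (∃ i, x ≤ y.moveLeft i) ∨ ∃ j, x.moveRight j ≤ y := by
  cases x; cases y; exact Iff.rfl

theorem lf_of_le_moveLeft {x y : PGame.{u}} (i : y.LeftMoves) (h : x ≤ y.moveLeft i) : x ⧏ y :=
  lf_iff_exists_le.2 (Or.inl ⟨i, h⟩)

theorem lf_of_moveRight_le {x y : PGame.{u}} (j : x.RightMoves) (h : x.moveRight j ≤ y) :
    x ⧏ y :=
  lf_iff_exists_le.2 (Or.inr ⟨j, h⟩)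

theorem moveLeft_lf_of_le {x y : PGame.{u}} (h : x ≤ y) (i : x.LeftMoves) : x.moveLeft i ⧏ y :=
  (le_iff_forall_lf.1 h).1 i

theorem lf_moveRight_of_le {x y : PGame.{u}} (h : x ≤ y) (j : y.RightMoves) :
    x ⧏ y.moveRight j :=
  (le_iff_forall_lf.1 h).2 j

theorem le_iff_not_lf_and_lf_iff_not_le (x y : PGame.{u}) :
    (x ≤ y ↔ ¬ y ⧏ x) ∧ (x ⧏ y ↔ ¬ y ≤ x) := by
  induction x generalizing y with
  | mk xl xr xL xR IHxl IHxr =>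
    induction y with
    | mk yl yr yL yR IHyl IHyr =>
      rw [le_iff_forall_lf, lf_iff_exists_le, lf_iff_exists_le, le_iff_forall_lf]
      simp only [not_or, not_exists, not_and_or, not_forall]
      exact ⟨and_congr (forall_congr' fun i => (IHxl i _).2) (forall_congr' fun j => (IHyr j).2),
        or_congr (exists_congr fun i => (IHyl i).1) (exists_congr fun j => (IHxr j _).1)⟩

theorem not_le {x y : PGame.{u}} : ¬ x ≤ y ↔ y ⧏ x :=
  ((le_iff_not_lf_and_lf_iff_not_le y x).2).symm

theorem not_lf {x y : PGame.{u}} : ¬ x ⧏ y ↔ y ≤ x :=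
  ((le_iff_not_lf_and_lf_iff_not_le y x).1).symm

protected theorem le_refl (x : PGame.{u}) : x ≤ x := by
  induction x with
  | mk xl xr xL xR IHl IHr =>
    exact le_iff_forall_lf.2
      ⟨fun i => lf_of_le_moveLeft i (IHl i), fun j => lf_of_moveRight_le j (IHr j)⟩

theorem le_trans_aux {x y z : PGame.{u}}
    (h₁ : ∀ {i}, y ≤ z → z ≤ x.moveLeft i → y ≤ x.moveLeft i)
    (h₂ : ∀ {j}, z.moveRight j ≤ x → x ≤ y → z.moveRight j ≤ y)
    (hxy : x ≤ y) (hyz : y ≤ z) :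
    x ≤ z :=
  le_iff_forall_lf.2
    ⟨fun i => not_le.1 fun h => not_lf.2 (h₁ hyz h) (moveLeft_lf_of_le hxy i),
     fun j => not_le.1 fun h => not_lf.2 (h₂ h hxy) (lf_moveRight_of_le hyz j)⟩

/-- The three rotations are proved together because each one's induction step needs the others. -/
theorem le_trans_rotations (x y z : PGame.{u}) :
    (x ≤ y → y ≤ z → x ≤ z) ∧ (y ≤ z → z ≤ x → y ≤ x) ∧
      (z ≤ x → x ≤ y → z ≤ y) := by
  induction x generalizing y z with
  | mk xl xr xL xR IHxl IHxr =>
  induction y generalizing z with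
  | mk yl yr yL yR IHyl IHyr =>
  induction z with
  | mk zl zr zL zR IHzl IHzr =>
  exact
    ⟨le_trans_aux (fun {i} => (IHxl i _ _).2.1) fun {j} => (IHzr j).2.2,
      le_trans_aux (fun {i} => (IHyl i _).2.2) fun {j} => (IHxr j _ _).1,
      le_trans_aux (fun {i} => (IHzl i).1) fun {j} => (IHyr j _).2.1⟩

noncomputable instance : Preorder PGame.{u} where
  le_refl := PGame.le_refl
  le_trans x y z := (le_trans_rotations x y z).1

theorem lf_of_le_of_lf {x y z : PGame.{u}} (h₁ : x ≤ y) (h₂ : y ⧏ z) : x ⧏ z :=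
  not_le.1 fun h => not_lf.2 (le_trans h h₁) h₂

theorem lf_of_lf_of_le {x y z : PGame.{u}} (h₁ : x ⧏ y) (h₂ : y ≤ z) : x ⧏ z :=
  not_le.1 fun h => not_lf.2 (le_trans h₂ h) h₁

instance : Trans (α := PGame.{u}) (· ≤ ·) (· ⧏ ·) (· ⧏ ·) := ⟨lf_of_le_of_lf⟩

instance : Trans (α := PGame.{u}) (· ⧏ ·) (· ≤ ·) (· ⧏ ·) := ⟨lf_of_lf_of_le⟩

theorem equiv_refl (x : PGame.{u}) : x ≈ x := ⟨le_rfl, le_rfl⟩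

theorem equiv_trans {x y z : PGame.{u}} (h₁ : x ≈ y) (h₂ : y ≈ z) : x ≈ z :=
  ⟨le_trans h₁.1 h₂.1, le_trans h₂.2 h₁.2⟩

theorem forall_leftMoves_add {x y : PGame.{u}} {P : PGame.{u} → Prop} :
    (∀ k, P ((x + y).moveLeft k)) ↔
      (∀ i, P (x.moveLeft i + y)) ∧ ∀ i, P (x + y.moveLeft i) := by
  cases x; cases y; exact Sum.forall

theorem forall_rightMoves_add {x y : PGame.{u}} {P : PGame.{u} → Prop} :
    (∀ k, P ((x + y).moveRight k)) ↔
      (∀ j, P (x.moveRight j + y)) ∧ ∀ j, P (x + y.moveRight j) := by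
  cases x; cases y; exact Sum.forall

theorem add_lf_of_add_moveRight_le {x y z : PGame.{u}} (j : y.RightMoves)
    (h : x + y.moveRight j ≤ z) : x + y ⧏ z := by
  cases x; cases y; exact lf_of_moveRight_le (Sum.inr j) h

theorem add_le_add_right_and_add_lf_add_right (x y z : PGame.{u}) :
    (x ≤ y → x + z ≤ y + z) ∧ (x ⧏ y → x + z ⧏ y + z) := by
  induction z generalizing x y with
  | mk zl zr zL zR IHzl IHzr =>
  induction x generalizing y with
  | mk xl xr xL xR IHxl IHxr =>
  induction y with
  | mk yl yr yL yR IHyl IHyr =>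
  constructor
  · intro h
    obtain ⟨hl, hr⟩ := le_iff_forall_lf.1 h
    refine le_iff_forall_lf.2 ⟨?_, ?_⟩
    · rintro (i | k)
      · exact (IHxl i _).2 (hl i)
      · exact lf_of_le_moveLeft (Sum.inr k) ((IHzl k _ _).1 h)
    · rintro (j | k)
      · exact (IHyr j).2 (hr j)
      · exact lf_of_moveRight_le (Sum.inr k) ((IHzr k _ _).1 h)
  · intro h
    rcases lf_iff_exists_le.1 h with ⟨i, hi⟩ | ⟨j, hj⟩
    · exact lf_of_le_moveLeft (Sum.inl i) ((IHyl i).1 hi)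
    · exact lf_of_moveRight_le (Sum.inl j) ((IHxr j _).1 hj)

protected theorem add_le_add_right {x y : PGame.{u}} (h : x ≤ y) (z : PGame.{u}) :
    x + z ≤ y + z :=
  (add_le_add_right_and_add_lf_add_right x y z).1 h

protected theorem add_lf_add_right {x y : PGame.{u}} (h : x ⧏ y) (z : PGame.{u}) :
    x + z ⧏ y + z :=
  (add_le_add_right_and_add_lf_add_right x y z).2 h

theorem add_comm_le (x y : PGame.{u}) : x + y ≤ y + x := by
  induction x generalizing y with
  | mk xl xr xL xR IHxl IHxr =>
  induction y with
  | mk yl yr yL yR IHyl IHyr =>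
  refine le_iff_forall_lf.2 ⟨?_, ?_⟩
  · rintro (i | k)
    · exact lf_of_le_moveLeft (Sum.inr i) (IHxl i _)
    · exact lf_of_le_moveLeft (Sum.inl k) (IHyl k)
  · rintro (k | j)
    · exact lf_of_moveRight_le (Sum.inr k) (IHyr k)
    · exact lf_of_moveRight_le (Sum.inl j) (IHxr j _)

theorem add_right_comm_le (x y z : PGame.{u}) : x + y + z ≤ x + z + y := by
  induction x generalizing y z with
  | mk xl xr xL xR IHxl IHxr =>
  induction y generalizing z with
  | mk yl yr yL yR IHyl IHyr =>
  induction z with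
  | mk zl zr zL zR IHzl IHzr =>
  refine le_iff_forall_lf.2 ⟨?_, ?_⟩
  · rintro ((i | j) | k)
    · exact lf_of_le_moveLeft (Sum.inl (Sum.inl i)) (IHxl i _ _)
    · exact lf_of_le_moveLeft (Sum.inr j) (IHyl j _)
    · exact lf_of_le_moveLeft (Sum.inl (Sum.inr k)) (IHzl k)
  · rintro ((i | k) | j)
    · exact lf_of_moveRight_le (Sum.inl (Sum.inl i)) (IHxr i _ _)
    · exact lf_of_moveRight_le (Sum.inr k) (IHzr k)
    · exact lf_of_moveRight_le (Sum.inl (Sum.inr j)) (IHyr j _)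

theorem add_zero_equiv (x : PGame.{u}) : x + 0 ≈ x := by
  induction x with
  | mk xl xr xL xR IHl IHr =>
  constructor
  · refine le_iff_forall_lf.2 ⟨?_, fun j => lf_of_moveRight_le (Sum.inl j) (IHr j).1⟩
    rintro (i | i)
    · exact lf_of_le_moveLeft i (IHl i).1
    · exact isEmptyElim (α := (0 : PGame.{u}).LeftMoves) i
  · refine le_iff_forall_lf.2 ⟨fun i => lf_of_le_moveLeft (Sum.inl i) (IHl i).2, ?_⟩
    rintro (j | j)
    · exact lf_of_moveRight_le j (IHr j).2
    · exact isEmptyElim (α := (0 : PGame.{u}).RightMoves) j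

theorem add_congr_left {x y : PGame.{u}} (h : x ≈ y) (z : PGame.{u}) : x + z ≈ y + z :=
  ⟨PGame.add_le_add_right h.1 z, PGame.add_le_add_right h.2 z⟩

theorem add_right_comm_equiv (x y z : PGame.{u}) : x + y + z ≈ x + z + y :=
  ⟨add_right_comm_le x y z, add_right_comm_le x z y⟩

theorem le_add_of_nonneg_right {x y : PGame.{u}} (h : 0 ≤ y) : x ≤ x + y :=
  calc x ≤ x + 0 := (add_zero_equiv x).2
    _ ≤ 0 + x := add_comm_le x 0
    _ ≤ y + x := PGame.add_le_add_right h x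
    _ ≤ x + y := add_comm_le y x

theorem lf_add_of_zero_lf {x y : PGame.{u}} (h : 0 ⧏ y) : x ⧏ x + y :=
  calc x ≤ 0 + x := le_trans (add_zero_equiv x).2 (add_comm_le x 0)
    _ ⧏ y + x := PGame.add_lf_add_right h x
    _ ≤ x + y := add_comm_le y x

protected theorem add_nonneg {x y : PGame.{u}} (hx : 0 ≤ x) (hy : 0 ≤ y) : 0 ≤ x + y :=
  le_trans hx (le_add_of_nonneg_right hy)

theorem ofLists_singleton_moveLeft (x y : PGame.{u}) (i) : (ofLists [x] [y]).moveLeft i = x :=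
  List.getElem_singleton _

theorem ofLists_singleton_moveRight (x y : PGame.{u}) (j) : (ofLists [x] [y]).moveRight j = y :=
  List.getElem_singleton _

theorem lf_ofLists_singleton_of_le {x y z : PGame.{u}} (h : z ≤ x) : z ⧏ ofLists [x] [y] :=
  lf_of_le_moveLeft (y := ofLists [x] [y]) ⟨0, Nat.one_pos⟩ h

theorem ofLists_singleton_lf_of_le {x y z : PGame.{u}} (h : y ≤ z) : ofLists [x] [y] ⧏ z :=
  lf_of_moveRight_le (x := ofLists [x] [y]) ⟨0, Nat.one_pos⟩ h

theorem ofLists_singleton_le_iff {x y z : PGame.{u}} :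
    ofLists [x] [y] ≤ z ↔ x ⧏ z ∧ ∀ j, ofLists [x] [y] ⧏ z.moveRight j := by
  rw [le_iff_forall_lf]
  simp only [ofLists_singleton_moveLeft]
  exact and_congr_left' ⟨fun h => h ⟨0, Nat.one_pos⟩, fun h _ => h⟩

theorem le_ofLists_singleton_iff {x y z : PGame.{u}} :
    z ≤ ofLists [x] [y] ↔ (∀ i, z.moveLeft i ⧏ ofLists [x] [y]) ∧ z ⧏ y := by
  rw [le_iff_forall_lf]
  simp only [ofLists_singleton_moveRight]
  exact and_congr_right' ⟨fun h => h ⟨0, Nat.one_pos⟩, fun h _ => h⟩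

theorem ofLists_singleton_le_ofLists_singleton {x y x' y' : PGame.{u}} (hx : x ≤ x')
    (hy : y ≤ y') : ofLists [x] [y] ≤ ofLists [x'] [y'] :=
  ofLists_singleton_le_iff.2
    ⟨lf_ofLists_singleton_of_le hx, fun j => by
      rw [ofLists_singleton_moveRight]; exact ofLists_singleton_lf_of_le hy⟩

end SetTheory.PGame

theorem star'_moveLeft (i) : star'.moveLeft i = 0 := ofLists_singleton_moveLeft _ _ i

theorem up'_moveLeft (i) : up'.moveLeft i = 0 := ofLists_singleton_moveLeft _ _ i

theorem up'_moveRight (j) : up'.moveRight j = star' := ofLists_singleton_moveRight _ _ j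

theorem zero_lf_star' : 0 ⧏ star' := lf_ofLists_singleton_of_le le_rfl

theorem zero_lf_up' : 0 ⧏ up' := lf_ofLists_singleton_of_le le_rfl

theorem zero_le_up' : 0 ≤ up' :=
  le_ofLists_singleton_iff.2 ⟨isEmptyElim, zero_lf_star'⟩

theorem add_star'_lf_of_le {x z : PGame} (h : x ≤ z) : x + star' ⧏ z :=
  add_lf_of_add_moveRight_le (y := star') ⟨0, Nat.one_pos⟩ (le_trans (add_zero_equiv x).1 h)

theorem add_up'_lf_of_add_star'_le {x z : PGame} (h : x + star' ≤ z) : x + up' ⧏ z :=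
  add_lf_of_add_moveRight_le (y := up') ⟨0, Nat.one_pos⟩ h

theorem zero_le_nUp : ∀ n : ℕ, 0 ≤ nUp n
  | 0 => le_rfl
  | n + 1 => PGame.add_nonneg (zero_le_nUp n) zero_le_up'

theorem nUp_le_nUp_succ (n : ℕ) : nUp n ≤ nUp (n + 1) := le_add_of_nonneg_right zero_le_up'

theorem nUp_lf_nUp_succ (n : ℕ) : nUp n ⧏ nUp (n + 1) := lf_add_of_zero_lf zero_lf_up'

theorem zero_lf_nUp_succ (n : ℕ) : 0 ⧏ nUp (n + 1) :=
  lf_of_le_of_lf (zero_le_nUp n) (nUp_lf_nUp_succ n)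

theorem nUp_succ_moveLeft_equiv (n : ℕ) : ∀ i, (nUp (n + 1)).moveLeft i ≈ nUp n := by
  refine forall_leftMoves_add (x := nUp n) (y := up') (P := (· ≈ nUp n)) |>.2
    ⟨fun i => ?_, fun i => ?_⟩
  · cases n with
    | zero => exact isEmptyElim (α := (0 : PGame).LeftMoves) i
    | succ m => exact add_congr_left (nUp_succ_moveLeft_equiv m i) up'
  · rw [up'_moveLeft]
    exact add_zero_equiv _

theorem nUp_succ_moveRight_equiv (n : ℕ) :
    ∀ j, (nUp (n + 1)).moveRight j ≈ nUp n + star' := by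
  refine forall_rightMoves_add (x := nUp n) (y := up') (P := (· ≈ nUp n + star')) |>.2
    ⟨fun j => ?_, fun j => ?_⟩
  · cases n with
    | zero => exact isEmptyElim (α := (0 : PGame).RightMoves) j
    | succ m =>
      exact equiv_trans (add_congr_left (nUp_succ_moveRight_equiv m j) up')
        (add_right_comm_equiv _ _ _)
  · rw [up'_moveRight]
    exact equiv_refl _

noncomputable def zeroNUpStar (n : ℕ) : PGame := ofLists [0] [nUp n + star']

theorem zeroNUpStar_le_succ (n : ℕ) : zeroNUpStar n ≤ zeroNUpStar (n + 1) :=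
  ofLists_singleton_le_ofLists_singleton le_rfl
    (PGame.add_le_add_right (nUp_le_nUp_succ n) star')

theorem zeroNUpStar_equiv_of_lf {n : ℕ} (h : nUp.{u} n ⧏ zeroNUpStar n) :
    zeroNUpStar.{u} n ≈ nUp (n + 1) :=
  ⟨ofLists_singleton_le_iff.2 ⟨zero_lf_nUp_succ n,
      fun j => ofLists_singleton_lf_of_le (nUp_succ_moveRight_equiv n j).2⟩,
    le_ofLists_singleton_iff.2 ⟨fun i => lf_of_le_of_lf (nUp_succ_moveLeft_equiv n i).1 h,
      add_up'_lf_of_add_star'_le le_rfl⟩⟩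

theorem nUp_add_star'_le_zeroNUpStar_succ {n : ℕ} (h : nUp.{u} n ⧏ zeroNUpStar n)
    (hL : ∀ i, (nUp.{u} n).moveLeft i ≤ zeroNUpStar (n + 1)) :
    nUp.{u} n + star' ≤ zeroNUpStar (n + 1) := by
  refine le_ofLists_singleton_iff.2
    ⟨forall_leftMoves_add (P := (· ⧏ zeroNUpStar (n + 1))) |>.2
      ⟨fun i => add_star'_lf_of_le (hL i), fun i => ?_⟩,
      PGame.add_lf_add_right (nUp_lf_nUp_succ n) star'⟩
  rw [star'_moveLeft]
  exact lf_of_le_of_lf (add_zero_equiv _).1 (lf_of_lf_of_le h (zeroNUpStar_le_succ n))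

theorem nUp_lf_zeroNUpStar_and_add_star'_le (n : ℕ) :
    nUp.{u} n ⧏ zeroNUpStar n ∧ nUp.{u} n + star' ≤ zeroNUpStar (n + 1) := by
  induction n with
  | zero =>
    have h : nUp 0 ⧏ zeroNUpStar 0 := lf_ofLists_singleton_of_le le_rfl
    exact ⟨h, nUp_add_star'_le_zeroNUpStar_succ h
      fun i => isEmptyElim (α := (0 : PGame).LeftMoves) i⟩
  | succ n ih =>
    have h : nUp (n + 1) ⧏ zeroNUpStar (n + 1) := add_up'_lf_of_add_star'_le ih.2
    refine ⟨h, nUp_add_star'_le_zeroNUpStar_succ h fun i => ?_⟩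
    calc (nUp (n + 1)).moveLeft i ≤ nUp n := (nUp_succ_moveLeft_equiv n i).1
      _ ≤ nUp (n + 1) := nUp_le_nUp_succ n
      _ ≤ zeroNUpStar n := (zeroNUpStar_equiv_of_lf ih.1).2
      _ ≤ zeroNUpStar (n + 1) := zeroNUpStar_le_succ n
      _ ≤ zeroNUpStar (n + 2) := zeroNUpStar_le_succ (n + 1)

theorem stmt1 (n : ℕ) :
    PGame.ofLists [0] [nUp n + star'] ≈ nUp (n + 1) :=
  zeroNUpStar_equiv_of_lf (nUp_lf_zeroNUpStar_and_add_star'_le n).1
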